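/- Mean protein number: for all real a, b with 0 < a < b, all real ν > 0 and θ with 0 < θ ≤ 1, setting P_n = P_{0,n} + P_{1,n}, the family (n·P_n)_{n∈ℕ} is summable and ⟨n⟩ := ∑_{n=0}^∞ n·P_n = ν·(a/(Cb))·M(a+1, b+1, ν(1−θ)) = ν·p₁, where C = M(a, b, ν(1−θ)) and p₁ = ∑_{n=0}^∞ P_{1,n}. -/

import Mathlib

open scoped BigOperators

/-- Pochhammer symbol `(a)ₙ = a(a+1)⋯(a+n−1)`, `(a)₀ = 1`. -/
noncomputable def poch (a : ℝ) (n : ℕ) : ℝ := ∏ k ∈ Finset.range n, (a + k)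

/-- Kummer's confluent hypergeometric function `M(a,b,z)`. -/
noncomputable def kummerM (a b z : ℝ) : ℝ :=
  ∑' k : ℕ, poch a k / poch b k * z ^ k / (Nat.factorial k : ℝ)

/-- Steady-state probability `P_{0,n}` of the binary gene model. -/
noncomputable def P0 (a b ν θ : ℝ) (n : ℕ) : ℝ :=
  (b - a) / (kummerM a b (ν * (1 - θ)) * b) * (ν ^ n / (Nat.factorial n : ℝ)) *
    (poch a n / poch (1 + b) n) * kummerM (a + n) (1 + b + n) (-(ν * θ))

/-- Steady-state probability `P_{1,n}` of the binary gene model. -/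
noncomputable def P1 (a b ν θ : ℝ) (n : ℕ) : ℝ :=
  a / (kummerM a b (ν * (1 - θ)) * b) * (ν ^ n / (Nat.factorial n : ℝ)) *
    (poch (1 + a) n / poch (1 + b) n) * kummerM (1 + a + n) (1 + b + n) (-(ν * θ))


lemma poch_pos {α : ℝ} (hα : 0 < α) (n : ℕ) : 0 < poch α n :=
  Finset.prod_pos fun k _ => by positivity

lemma poch_le {α β : ℝ} (hα : 0 < α) (hαβ : α ≤ β) (n : ℕ) : poch α n ≤ poch β n :=
  Finset.prod_le_prod (fun k _ => by positivity) (fun k _ => by linarith)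

lemma poch_add (α : ℝ) (n k : ℕ) : poch α (n + k) = poch α n * poch (α + n) k := by
  unfold poch
  rw [Finset.prod_range_add]
  congr 1
  exact Finset.prod_congr rfl fun i _ => by push_cast; ring

lemma poch_one_add (α : ℝ) (m : ℕ) : poch α (m + 1) = α * poch (α + 1) m := by
  unfold poch
  rw [Finset.prod_range_succ']
  simp only [Nat.cast_zero, add_zero]
  rw [mul_comm]
  congr 1
  exact Finset.prod_congr rfl fun i _ => by push_cast; ring

lemma poch_succ (α : ℝ) (m : ℕ) : α * poch (α + 1) m = poch α m * (α + m) := by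
  rw [← poch_one_add]
  exact Finset.prod_range_succ _ _

lemma poch_comm (α : ℝ) (m : ℕ) : poch (1 + α) m = poch (α + 1) m := by
  rw [add_comm]

lemma ratio_pos {α β : ℝ} (hα : 0 < α) (hβ : 0 < β) (n : ℕ) :
    0 < poch α n / poch β n := div_pos (poch_pos hα n) (poch_pos hβ n)

lemma ratio_le_one {α β : ℝ} (hα : 0 < α) (hαβ : α ≤ β) (n : ℕ) :
    poch α n / poch β n ≤ 1 :=
  div_le_one_of_le₀ (poch_le hα hαβ n) (poch_pos (lt_of_lt_of_le hα hαβ) n).le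

lemma kummer_summable {α β : ℝ} (hα : 0 < α) (hαβ : α ≤ β) (x : ℝ) :
    Summable fun k : ℕ => poch α k / poch β k * x ^ k / (Nat.factorial k : ℝ) := by
  apply Summable.of_norm_bounded (Real.summable_pow_div_factorial |x|)
  intro k
  have h1 := ratio_pos hα (lt_of_lt_of_le hα hαβ) k
  have h2 := ratio_le_one hα hαβ k
  have hk : (0:ℝ) < (Nat.factorial k : ℝ) := by positivity
  rw [Real.norm_eq_abs, abs_div, abs_mul, abs_pow, Nat.abs_cast]
  rw [abs_of_pos h1]
  have : poch α k / poch β k * |x| ^ k ≤ 1 * |x| ^ k := by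
    apply mul_le_mul_of_nonneg_right h2 (by positivity)
  rw [one_mul] at this
  gcongr

lemma antidiag_sum (x y : ℝ) (m : ℕ) :
    ∑ p ∈ Finset.HasAntidiagonal.antidiagonal m, x ^ p.1 / (Nat.factorial p.1 : ℝ) * (y ^ p.2 / (Nat.factorial p.2 : ℝ))
      = (x + y) ^ m / (Nat.factorial m : ℝ) := by
  rw [Finset.Nat.sum_antidiagonal_eq_sum_range_succ_mk, add_pow, Finset.sum_div]
  refine Finset.sum_congr rfl fun i hi => ?_
  have him : i ≤ m := Nat.lt_succ_iff.mp (Finset.mem_range.mp hi)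
  have hc : ((m.choose i : ℝ)) * (Nat.factorial i) * (Nat.factorial (m - i)) = (Nat.factorial m) := by
    exact_mod_cast congrArg (Nat.cast : ℕ → ℝ) (Nat.choose_mul_factorial_mul_factorial him)
  have h1 : (Nat.factorial i : ℝ) ≠ 0 := by positivity
  have h2 : (Nat.factorial (m - i) : ℝ) ≠ 0 := by positivity
  have h3 : (Nat.factorial m : ℝ) ≠ 0 := by positivity
  field_simp
  linear_combination (-(x ^ i * y ^ (m - i))) * hc

lemma antidiag_sum_weighted (x y : ℝ) (m : ℕ) :
    ∑ p ∈ Finset.HasAntidiagonal.antidiagonal (m + 1),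
        (p.1 : ℝ) * (x ^ p.1 / (Nat.factorial p.1 : ℝ) * (y ^ p.2 / (Nat.factorial p.2 : ℝ)))
      = x * ((x + y) ^ m / (Nat.factorial m : ℝ)) := by
  rw [Finset.Nat.sum_antidiagonal_eq_sum_range_succ_mk, Finset.sum_range_succ']
  simp only [Nat.cast_zero, zero_mul, add_zero]
  rw [← antidiag_sum x y m, Finset.Nat.sum_antidiagonal_eq_sum_range_succ_mk, Finset.mul_sum]
  refine Finset.sum_congr rfl fun i hi => ?_
  have h : m + 1 - (i + 1) = m - i := by omega
  rw [h, Nat.factorial_succ]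
  have h1 : (Nat.factorial i : ℝ) ≠ 0 := by positivity
  have h2 : (Nat.factorial (m - i) : ℝ) ≠ 0 := by positivity
  push_cast
  field_simp
  ring

noncomputable def dterm (α β x y : ℝ) (p : ℕ × ℕ) : ℝ :=
  poch α (p.1 + p.2) / poch β (p.1 + p.2) *
    (x ^ p.1 / (Nat.factorial p.1 : ℝ) * (y ^ p.2 / (Nat.factorial p.2 : ℝ)))

lemma summable_nat_mul_pow_div_factorial (x : ℝ) :
    Summable fun n : ℕ => (n : ℝ) * (x ^ n / (Nat.factorial n : ℝ)) := by
  apply Summable.of_norm_bounded (Real.summable_pow_div_factorial (2 * |x|))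
  intro n
  have hn : (n : ℝ) ≤ 2 ^ n := by
    exact_mod_cast (Nat.lt_two_pow_self (n := n)).le
  have hfac : (0:ℝ) < (Nat.factorial n : ℝ) := by positivity
  rw [Real.norm_eq_abs, abs_mul, Nat.abs_cast, abs_div, abs_pow, Nat.abs_cast, mul_pow]
  rw [mul_div_assoc]
  gcongr

lemma dterm_norm_le {α β : ℝ} (hα : 0 < α) (hαβ : α ≤ β) (x y : ℝ) (p : ℕ × ℕ) :
    ‖dterm α β x y p‖ ≤ |x| ^ p.1 / (Nat.factorial p.1 : ℝ) * (|y| ^ p.2 / (Nat.factorial p.2 : ℝ)) := by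
  have hβ : 0 < β := lt_of_lt_of_le hα hαβ
  have h1 := ratio_pos hα hβ (p.1 + p.2)
  have h2 := ratio_le_one hα hαβ (p.1 + p.2)
  unfold dterm
  rw [Real.norm_eq_abs, abs_mul, abs_of_pos h1, abs_mul, abs_div, abs_div, abs_pow, abs_pow,
    Nat.abs_cast, Nat.abs_cast]
  have hb : (0:ℝ) ≤ |x| ^ p.1 / (Nat.factorial p.1 : ℝ) * (|y| ^ p.2 / (Nat.factorial p.2 : ℝ)) := by
    positivity
  calc poch α (p.1 + p.2) / poch β (p.1 + p.2) *
      (|x| ^ p.1 / (Nat.factorial p.1 : ℝ) * (|y| ^ p.2 / (Nat.factorial p.2 : ℝ)))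
      ≤ 1 * (|x| ^ p.1 / (Nat.factorial p.1 : ℝ) * (|y| ^ p.2 / (Nat.factorial p.2 : ℝ))) := by
        exact mul_le_mul_of_nonneg_right h2 hb
    _ = _ := one_mul _

lemma dterm_summable {α β : ℝ} (hα : 0 < α) (hαβ : α ≤ β) (x y : ℝ) :
    Summable (dterm α β x y) := by
  apply Summable.of_norm_bounded
    ((Real.summable_pow_div_factorial |x|).mul_of_nonneg (Real.summable_pow_div_factorial |y|)
      (fun n => by positivity) (fun n => by positivity))
  exact dterm_norm_le hα hαβ x y

lemma dterm_weighted_summable {α β : ℝ} (hα : 0 < α) (hαβ : α ≤ β) (x y : ℝ) :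
    Summable fun p : ℕ × ℕ => (p.1 : ℝ) * dterm α β x y p := by
  apply Summable.of_norm_bounded
    ((summable_nat_mul_pow_div_factorial |x|).mul_of_nonneg
      (Real.summable_pow_div_factorial |y|)
      (fun n => by positivity) (fun n => by positivity))
  intro p
  rw [norm_mul, Real.norm_natCast]
  calc (p.1 : ℝ) * ‖dterm α β x y p‖
      ≤ (p.1 : ℝ) * (|x| ^ p.1 / (Nat.factorial p.1 : ℝ) * (|y| ^ p.2 / (Nat.factorial p.2 : ℝ))) := by
        exact mul_le_mul_of_nonneg_left (dterm_norm_le hα hαβ x y p) (Nat.cast_nonneg _)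
    _ = (p.1 : ℝ) * (|x| ^ p.1 / (Nat.factorial p.1 : ℝ)) * (|y| ^ p.2 / (Nat.factorial p.2 : ℝ)) := by
        ring

lemma tsum_double {f : ℕ × ℕ → ℝ} (hf : Summable f) :
    ∑' p : ℕ × ℕ, f p = ∑' m : ℕ, ∑ p ∈ Finset.HasAntidiagonal.antidiagonal m, f p := by
  calc ∑' p : ℕ × ℕ, f p
      = ∑' c : Σ n : ℕ, {x // x ∈ Finset.HasAntidiagonal.antidiagonal n},
          f (Finset.HasAntidiagonal.sigmaAntidiagonalEquivProd c) := (Equiv.tsum_eq _ f).symm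
    _ = ∑' (m : ℕ) (c : {x // x ∈ Finset.HasAntidiagonal.antidiagonal m}),
          f (Finset.HasAntidiagonal.sigmaAntidiagonalEquivProd ⟨m, c⟩) :=
        Summable.tsum_sigma ((Equiv.summable_iff _).mpr hf)
    _ = ∑' m : ℕ, ∑ p ∈ Finset.HasAntidiagonal.antidiagonal m, f p := tsum_congr fun m => by
        simp only [Finset.HasAntidiagonal.sigmaAntidiagonalEquivProd_apply]
        exact Finset.tsum_subtype _ f

lemma summable_antidiag {f : ℕ × ℕ → ℝ} (hf : Summable f) :
    Summable fun m : ℕ => ∑ p ∈ Finset.HasAntidiagonal.antidiagonal m, f p := by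
  have h := ((Equiv.summable_iff Finset.HasAntidiagonal.sigmaAntidiagonalEquivProd).mpr hf).sigma
  refine h.congr fun m => ?_
  exact Finset.tsum_subtype (Finset.HasAntidiagonal.antidiagonal m) f

lemma tsum_dterm {α β : ℝ} (hα : 0 < α) (hαβ : α ≤ β) (x y : ℝ) :
    ∑' p : ℕ × ℕ, dterm α β x y p = kummerM α β (x + y) := by
  rw [tsum_double (dterm_summable hα hαβ x y)]
  refine tsum_congr fun m => ?_
  have h : ∀ p ∈ Finset.HasAntidiagonal.antidiagonal m, dterm α β x y p =
      poch α m / poch β m *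
        (x ^ p.1 / (Nat.factorial p.1 : ℝ) * (y ^ p.2 / (Nat.factorial p.2 : ℝ))) := by
    intro p hp
    have hpm : p.1 + p.2 = m := Finset.HasAntidiagonal.mem_antidiagonal.mp hp
    unfold dterm
    rw [hpm]
  rw [Finset.sum_congr rfl h, ← Finset.mul_sum, antidiag_sum]
  ring

lemma tsum_dterm_weighted {α β : ℝ} (hα : 0 < α) (hαβ : α ≤ β) (x y : ℝ) :
    ∑' p : ℕ × ℕ, (p.1 : ℝ) * dterm α β x y p
      = x * (α / β) * kummerM (α + 1) (β + 1) (x + y) := by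
  have hβ : 0 < β := lt_of_lt_of_le hα hαβ
  rw [tsum_double (dterm_weighted_summable hα hαβ x y)]
  have hsum := summable_antidiag (dterm_weighted_summable hα hαβ x y)
  rw [Summable.tsum_eq_zero_add hsum]
  have h0 : ∑ p ∈ Finset.HasAntidiagonal.antidiagonal (0:ℕ), (p.1 : ℝ) * dterm α β x y p = 0 := by
    simp [Finset.Nat.antidiagonal_zero, dterm]
  rw [h0, zero_add]
  have key : ∀ m : ℕ, ∑ p ∈ Finset.HasAntidiagonal.antidiagonal (m + 1), (p.1 : ℝ) * dterm α β x y p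
      = x * (α / β) * (poch (α + 1) m / poch (β + 1) m * (x + y) ^ m / (Nat.factorial m : ℝ)) := by
    intro m
    have h : ∀ p : ℕ × ℕ, p ∈ Finset.HasAntidiagonal.antidiagonal (m + 1) → (p.1 : ℝ) * dterm α β x y p =
        poch α (m + 1) / poch β (m + 1) *
          ((p.1 : ℝ) * (x ^ p.1 / (Nat.factorial p.1 : ℝ) * (y ^ p.2 / (Nat.factorial p.2 : ℝ)))) := by
      intro p hp
      have hpm : p.1 + p.2 = m + 1 := Finset.HasAntidiagonal.mem_antidiagonal.mp hp
      unfold dterm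
      rw [hpm]
      ring
    rw [Finset.sum_congr rfl h, ← Finset.mul_sum, antidiag_sum_weighted]
    rw [poch_one_add α m, poch_one_add β m]
    have h1 : poch (β + 1) m ≠ 0 := (poch_pos (by linarith) m).ne'
    field_simp
  rw [tsum_congr key, tsum_mul_left]
  rfl

set_option maxHeartbeats 2000000 in
lemma stepA (a b ν θ : ℝ) (ha : 0 < a) (hab : a < b) (hν : 0 < ν) (hθ0 : 0 < θ) (hθ1 : θ ≤ 1)
    (hC : kummerM a b (ν * (1 - θ)) ≠ 0) (n : ℕ) :
    P0 a b ν θ n + P1 a b ν θ n =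
      (1 / kummerM a b (ν * (1 - θ))) * ∑' k : ℕ, dterm a b ν (-(ν * θ)) (n, k) := by
  have hb : 0 < b := lt_trans ha hab
  have hS0 : Summable fun k : ℕ =>
      poch (a + n) k / poch (1 + b + n) k * (-(ν * θ)) ^ k / (Nat.factorial k : ℝ) :=
    kummer_summable (by positivity) (by push_cast; linarith) _
  have hS1 : Summable fun k : ℕ =>
      poch (1 + a + n) k / poch (1 + b + n) k * (-(ν * θ)) ^ k / (Nat.factorial k : ℝ) :=
    kummer_summable (by positivity) (by push_cast; linarith) _
  unfold P0 P1
  set C := kummerM a b (ν * (1 - θ)) with hCdef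
  unfold kummerM
  rw [← tsum_mul_left, ← tsum_mul_left, ← tsum_mul_left,
    ← Summable.tsum_add (hS0.mul_left _) (hS1.mul_left _)]
  refine tsum_congr fun k => ?_
  have e1 : poch a n * poch (a + n) k = poch a (n + k) := (poch_add a n k).symm
  have e2 : poch (1 + a) n * poch (1 + a + n) k = poch (1 + a) (n + k) :=
    (poch_add (1 + a) n k).symm
  have e3 : poch (1 + b) n * poch (1 + b + n) k = poch (1 + b) (n + k) :=
    (poch_add (1 + b) n k).symm
  have s1 : a * poch (1 + a) (n + k) = poch a (n + k) * (a + (n + k : ℕ)) := by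
    rw [poch_comm]; exact poch_succ a (n + k)
  have s2 : b * poch (1 + b) (n + k) = poch b (n + k) * (b + (n + k : ℕ)) := by
    rw [poch_comm]; exact poch_succ b (n + k)
  have p1 : (0:ℝ) < poch (1 + b) n := poch_pos (by linarith) n
  have p2 : (0:ℝ) < poch (1 + b + n) k := poch_pos (by positivity) k
  have p3 : (0:ℝ) < poch b (n + k) := poch_pos hb (n + k)
  have hfn : (0:ℝ) < (Nat.factorial n : ℝ) := by positivity
  have hfk : (0:ℝ) < (Nat.factorial k : ℝ) := by positivity
  have key : (b - a) * (poch a n * poch (a + n) k) * poch b (n + k)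
      + a * (poch (1 + a) n * poch (1 + a + n) k) * poch b (n + k)
      = b * poch a (n + k) * (poch (1 + b) n * poch (1 + b + n) k) := by
    rw [e1, e2, e3]
    push_cast at s1 s2 ⊢
    linear_combination poch b (n + k) * s1 - poch a (n + k) * s2
  unfold dterm
  simp only
  push_cast at key ⊢
  field_simp [hC, hb.ne', p1.ne', p2.ne', p3.ne', hfn.ne', hfk.ne']
  linear_combination key

lemma stepB (a b ν θ : ℝ) (ha : 0 < a) (hab : a < b) (n : ℕ) :
    P1 a b ν θ n = (a / (kummerM a b (ν * (1 - θ)) * b)) *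
      ∑' k : ℕ, dterm (1 + a) (1 + b) ν (-(ν * θ)) (n, k) := by
  have hb : 0 < b := lt_trans ha hab
  unfold P1
  set C := kummerM a b (ν * (1 - θ)) with hCdef
  unfold kummerM
  rw [← tsum_mul_left, ← tsum_mul_left]
  refine tsum_congr fun k => ?_
  have e2 : poch (1 + a) n * poch (1 + a + n) k = poch (1 + a) (n + k) :=
    (poch_add (1 + a) n k).symm
  have e3 : poch (1 + b) n * poch (1 + b + n) k = poch (1 + b) (n + k) :=
    (poch_add (1 + b) n k).symm
  have p1 : (0:ℝ) < poch (1 + b) n := poch_pos (by linarith) n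
  have p2 : (0:ℝ) < poch (1 + b + n) k := poch_pos (by positivity) k
  have p4 : (0:ℝ) < poch (1 + b) (n + k) := poch_pos (by linarith) (n + k)
  have hfn : (0:ℝ) < (Nat.factorial n : ℝ) := by positivity
  have hfk : (0:ℝ) < (Nat.factorial k : ℝ) := by positivity
  have key : poch (1 + a) n * poch (1 + a + n) k * poch (1 + b) (n + k)
      = poch (1 + a) (n + k) * (poch (1 + b) n * poch (1 + b + n) k) := by
    rw [e2, e3]
  unfold dterm
  simp only
  by_cases hC : C = 0
  · simp [hC]
  field_simp [hC, hb.ne', p1.ne', p2.ne', p4.ne', hfn.ne', hfk.ne']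
  linear_combination (ν ^ n * (-(ν * θ)) ^ k * key)

/-- Mean protein number. -/
theorem mean_protein_number (a b ν θ : ℝ) (ha : 0 < a) (hab : a < b)
    (hν : 0 < ν) (hθ0 : 0 < θ) (hθ1 : θ ≤ 1) :
    Summable (fun n : ℕ => (n : ℝ) * (P0 a b ν θ n + P1 a b ν θ n)) ∧
    (∑' n : ℕ, (n : ℝ) * (P0 a b ν θ n + P1 a b ν θ n)) =
      ν * (a / (kummerM a b (ν * (1 - θ)) * b)) *
        kummerM (a + 1) (b + 1) (ν * (1 - θ)) ∧
    (∑' n : ℕ, (n : ℝ) * (P0 a b ν θ n + P1 a b ν θ n)) =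
      ν * (∑' n : ℕ, P1 a b ν θ n) := by
  have hb : 0 < b := lt_trans ha hab
  -- positivity of C
  have hzpos : 0 ≤ ν * (1 - θ) := by
    have : 0 ≤ 1 - θ := by linarith
    positivity
  have hCsum : Summable fun k : ℕ =>
      poch a k / poch b k * (ν * (1 - θ)) ^ k / (Nat.factorial k : ℝ) :=
    kummer_summable ha hab.le _
  have hC1 : (1:ℝ) ≤ kummerM a b (ν * (1 - θ)) := by
    have h0 : poch a 0 / poch b 0 * (ν * (1 - θ)) ^ 0 / (Nat.factorial 0 : ℝ) = 1 := by
      simp [poch]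
    calc (1:ℝ) = poch a 0 / poch b 0 * (ν * (1 - θ)) ^ 0 / (Nat.factorial 0 : ℝ) := h0.symm
      _ ≤ kummerM a b (ν * (1 - θ)) := Summable.le_tsum hCsum 0 fun i _ => by
          have := ratio_pos ha hb i
          positivity
  have hC : (0:ℝ) < kummerM a b (ν * (1 - θ)) := by linarith
  have hCne : kummerM a b (ν * (1 - θ)) ≠ 0 := hC.ne'
  have hW : Summable fun p : ℕ × ℕ => (p.1 : ℝ) * dterm a b ν (-(ν * θ)) p :=
    dterm_weighted_summable ha hab.le ν _
  have hD1 : Summable (dterm (1 + a) (1 + b) ν (-(ν * θ))) :=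
    dterm_summable (by linarith) (by linarith) ν _
  -- function rewriting
  have hfun : ∀ n : ℕ, (n : ℝ) * (P0 a b ν θ n + P1 a b ν θ n)
      = (1 / kummerM a b (ν * (1 - θ))) * ∑' k : ℕ, (n : ℝ) * dterm a b ν (-(ν * θ)) (n, k) := by
    intro n
    rw [stepA a b ν θ ha hab hν hθ0 hθ1 hCne n, tsum_mul_left]
    ring
  have hfe : (fun n : ℕ => (n : ℝ) * (P0 a b ν θ n + P1 a b ν θ n))
      = fun n : ℕ => (1 / kummerM a b (ν * (1 - θ))) *
          ∑' k : ℕ, (n : ℝ) * dterm a b ν (-(ν * θ)) (n, k) := funext hfun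
  have hsum1 : Summable fun n : ℕ => ∑' k : ℕ, (n : ℝ) * dterm a b ν (-(ν * θ)) (n, k) := by
    have h := hW.prod
    exact h.congr fun n => rfl
  -- the weighted tsum value
  have harg : ν + -(ν * θ) = ν * (1 - θ) := by ring
  have hval : ∑' p : ℕ × ℕ, (p.1 : ℝ) * dterm a b ν (-(ν * θ)) p
      = ν * (a / b) * kummerM (a + 1) (b + 1) (ν * (1 - θ)) := by
    rw [tsum_dterm_weighted ha hab.le ν (-(ν * θ)), harg]
  have hmain : (∑' n : ℕ, (n : ℝ) * (P0 a b ν θ n + P1 a b ν θ n)) =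
      ν * (a / (kummerM a b (ν * (1 - θ)) * b)) * kummerM (a + 1) (b + 1) (ν * (1 - θ)) := by
    rw [hfe, tsum_mul_left]
    have h2 : (∑' (n : ℕ) (k : ℕ), (n : ℝ) * dterm a b ν (-(ν * θ)) (n, k))
        = ∑' p : ℕ × ℕ, (p.1 : ℝ) * dterm a b ν (-(ν * θ)) p := by
      rw [Summable.tsum_prod hW]
    rw [h2, hval]
    field_simp
  refine ⟨?_, hmain, ?_⟩
  · rw [hfe]
    exact hsum1.mul_left _
  · -- third equality
    have hP1 : (∑' n : ℕ, P1 a b ν θ n)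
        = (a / (kummerM a b (ν * (1 - θ)) * b)) * kummerM (a + 1) (b + 1) (ν * (1 - θ)) := by
      have hfe1 : (fun n : ℕ => P1 a b ν θ n) = fun n : ℕ =>
          (a / (kummerM a b (ν * (1 - θ)) * b)) *
            ∑' k : ℕ, dterm (1 + a) (1 + b) ν (-(ν * θ)) (n, k) :=
        funext (stepB a b ν θ ha hab)
      rw [hfe1, tsum_mul_left]
      have h2 : (∑' (n : ℕ) (k : ℕ), dterm (1 + a) (1 + b) ν (-(ν * θ)) (n, k))
          = ∑' p : ℕ × ℕ, dterm (1 + a) (1 + b) ν (-(ν * θ)) p := by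
        rw [Summable.tsum_prod hD1]
      rw [h2, tsum_dterm (by linarith : (0:ℝ) < 1 + a) (by linarith : (1:ℝ) + a ≤ 1 + b) ν (-(ν * θ)), harg]
      rw [add_comm (1:ℝ) a, add_comm (1:ℝ) b]
    rw [hmain, hP1]
    ring
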